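/- For λ ∈ ℂ with λ not a positive integer, the function Φ^{(α,β)}_{-iλ}(t) = (2 cosh t)^{λ-ρ} ₂F₁((ρ-λ)/2, (α-β+1-λ)/2; 1-λ; cosh^{-2}t), with ρ = α+β+1, satisfies the asymptotic behavior Φ^{(α,β)}_{-iλ}(t) = e^{(λ-ρ)t}(1 + o(1)) as t → ∞; in particular, lim_{t→∞} e^{(ρ-λ)t} Φ^{(α,β)}_{-iλ}(t) = 1. -/

import Mathlib

/-!
The prefactor satisfies `e^{(ρ-λ)t} (2 cosh t)^{λ-ρ} = (1 + e^{-2t})^{λ-ρ} → 1`, and the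
hypergeometric factor is a power series with positive radius of convergence (radius `1`, or `∞`
when it terminates) evaluated at `cosh⁻² t → 0`, so it tends to its constant term `1`.
-/

open Real Complex Filter

/-- The Gauss hypergeometric series `₂F₁(a,b;c;z)`. -/
noncomputable def hyp2F1 (a b c z : ℂ) : ℂ :=
  ∑' k : ℕ, ((ascPochhammer ℂ k).eval a * (ascPochhammer ℂ k).eval b /
    ((ascPochhammer ℂ k).eval c * (Nat.factorial k : ℂ))) * z ^ k

/-- The Harish-Chandra series solution `Φ^{(α,β)}_{-iλ}(t)`. -/
noncomputable def jacobiHCPhi (α β : ℝ) (lam : ℂ) (t : ℝ) : ℂ :=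
  ((2 * Real.cosh t : ℝ) : ℂ) ^ (lam - ((α : ℂ) + β + 1)) *
    hyp2F1 ((((α : ℂ) + β + 1) - lam) / 2) (((α : ℂ) - β + 1 - lam) / 2) (1 - lam)
      ((Real.cosh t ^ 2 : ℝ) : ℂ)⁻¹

open scoped Topology

section OrdinaryHypergeometric

variable {𝕂 : Type*} (𝔸 : Type*) [RCLike 𝕂] [NormedDivisionRing 𝔸] [NormedAlgebra 𝕂 𝔸]

theorem ordinaryHypergeometricSeries_radius_pos (a b c : 𝕂) :
    0 < (ordinaryHypergeometricSeries 𝔸 a b c).radius := by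
  by_cases h : ∃ k : ℕ, (k : 𝕂) = -a ∨ (k : 𝕂) = -b ∨ (k : 𝕂) = -c
  · obtain ⟨k, hk | hk | hk⟩ := h <;> obtain rfl := neg_eq_iff_eq_neg.mp hk.symm <;>
      simp [ordinaryHypergeometric_radius_top_of_neg_nat₁,
        ordinaryHypergeometric_radius_top_of_neg_nat₂, ordinaryHypergeometric_radius_top_of_neg_nat₃]
  · push Not at h
    rw [ordinaryHypergeometricSeries_radius_eq_one 𝔸 a b c h]
    exact one_pos

theorem tendsto_ordinaryHypergeometric_nhds_zero [CompleteSpace 𝔸] (a b c : 𝕂) :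
    Tendsto (₂F₁ a b c) (𝓝 (0 : 𝔸)) (𝓝 1) := by
  have h : ContinuousAt (₂F₁ a b c) (0 : 𝔸) :=
    ((ordinaryHypergeometricSeries 𝔸 a b c).hasFPowerSeriesOnBall
      (ordinaryHypergeometricSeries_radius_pos 𝔸 a b c)).hasFPowerSeriesAt.continuousAt
  simpa using h.tendsto

end OrdinaryHypergeometric

theorem hyp2F1_eq_ordinaryHypergeometric (a b c : ℂ) : hyp2F1 a b c = ₂F₁ a b c := by
  ext z
  rw [hyp2F1, ordinaryHypergeometric_eq_tsum]
  congr! 2 with k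
  rw [smul_eq_mul]
  field_simp

theorem tendsto_hyp2F1_nhds_zero (a b c : ℂ) : Tendsto (hyp2F1 a b c) (𝓝 0) (𝓝 1) :=
  hyp2F1_eq_ordinaryHypergeometric a b c ▸ tendsto_ordinaryHypergeometric_nhds_zero ℂ a b c

theorem Real.tendsto_cosh_atTop : Tendsto cosh atTop atTop := by
  refine tendsto_atTop_mono (fun t => ?_) (tendsto_exp_atTop.atTop_div_const two_pos)
  rw [cosh_eq]
  linarith [exp_pos (-t)]

theorem Real.two_mul_cosh_mul_exp_neg (t : ℝ) :
    2 * Real.cosh t * rexp (-t) = 1 + rexp (-(2 * t)) := by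
  have h : rexp t * rexp (-t) = 1 := by rw [← exp_add, add_neg_cancel, exp_zero]
  rw [cosh_eq, show -(2 * t) = -t + -t by ring, exp_add]
  linear_combination h

theorem cexp_neg_mul_ofReal_cpow {x : ℝ} (hx : 0 < x) (s : ℂ) (u : ℝ) :
    cexp (-s * u) * (x : ℂ) ^ s = ((x * rexp (-u) : ℝ) : ℂ) ^ s := by
  rw [ofReal_mul, mul_cpow_ofReal_nonneg hx.le (exp_pos _).le,
    cpow_def_of_ne_zero (ofReal_ne_zero.mpr (exp_pos _).ne'), ← ofReal_log (exp_pos _).le,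
    Real.log_exp]
  push_cast
  ring_nf

theorem tendsto_cexp_mul_two_cosh_cpow (s : ℂ) :
    Tendsto (fun t : ℝ => cexp (-s * t) * ((2 * Real.cosh t : ℝ) : ℂ) ^ s) atTop (𝓝 1) := by
  have h : Tendsto (fun t => 2 * Real.cosh t * rexp (-t)) atTop (𝓝 1) := by
    simp_rw [two_mul_cosh_mul_exp_neg]
    simpa using (tendsto_exp_neg_atTop_nhds_zero.comp
      (tendsto_id.const_mul_atTop two_pos)).const_add 1
  have hcpow : ContinuousAt (fun x : ℝ => (x : ℂ) ^ s) 1 :=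
    (continuousAt_cpow_const (by simp)).comp continuous_ofReal.continuousAt
  have hlim : Tendsto (fun t => ((2 * Real.cosh t * rexp (-t) : ℝ) : ℂ) ^ s) atTop (𝓝 1) := by
    simpa only [Function.comp_def, ofReal_one, one_cpow] using hcpow.tendsto.comp h
  exact hlim.congr fun t => (cexp_neg_mul_ofReal_cpow (by positivity) s t).symm

theorem tendsto_ofReal_inv_cosh_sq_atTop :
    Tendsto (fun t : ℝ => ((Real.cosh t ^ 2 : ℝ) : ℂ)⁻¹) atTop (𝓝 0) := by
  simpa only [Function.comp_def, Pi.inv_apply, ofReal_inv, ofReal_zero] using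
    (continuous_ofReal.tendsto 0).comp
    ((tendsto_pow_atTop two_ne_zero).comp tendsto_cosh_atTop).inv_tendsto_atTop

theorem jacobiHCPhi_asymptotics_general (α β : ℝ) (lam : ℂ) :
    Tendsto (fun t : ℝ =>
        Complex.exp ((((α : ℂ) + β + 1) - lam) * t) * jacobiHCPhi α β lam t)
      atTop (nhds 1) := by
  set ρ : ℂ := (α : ℂ) + β + 1
  have hF := (tendsto_hyp2F1_nhds_zero ((ρ - lam) / 2) ((α - β + 1 - lam) / 2) (1 - lam)).comp
    tendsto_ofReal_inv_cosh_sq_atTop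
  simpa only [jacobiHCPhi, ρ, neg_sub, mul_assoc, mul_one, Function.comp_apply] using
    (tendsto_cexp_mul_two_cosh_cpow (lam - ρ)).mul hF

theorem jacobiHCPhi_asymptotics (α β : ℝ) (lam : ℂ)
    (hlam : ∀ m : ℕ, 0 < m → lam ≠ (m : ℂ)) :
    Tendsto (fun t : ℝ =>
        Complex.exp ((((α : ℂ) + β + 1) - lam) * t) * jacobiHCPhi α β lam t)
      atTop (nhds 1) :=
  jacobiHCPhi_asymptotics_general α β lam
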